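/- Fix polynomial coefficient functions v, b̃ⱼ, bⱼ : [0,1] → ℝ and abscissae cⱼ, and suppose Γₖ ≡ 0 on [0,1] for k = 1,...,p̃ (so the method has uniform stage order p̃ in its output component). Then the method has uniform order p̃+1 for the output (i.e. for every C^{p̃+2} function y, the error Ẽ^{s+1}(αh) = (1-v(α))y(-h) + v(α)y(0) + hΣⱼb̃ⱼ(α)y'(-h+cⱼh) + hΣⱼbⱼ(α)y'(cⱼh) - y(αh) is O(h^{p̃+2}) uniformly in α ∈ [0,1]) if and only if Γ_{p̃+1} ≡ 0 on [0,1]. -/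

import Mathlib

/-!
The error functional `y ↦ outError … y h α` is linear, and on monomials it is explicit:
the error of `x ^ (k + 1)` is exactly `(k + 1)! · Γ_{k+1}(α) · h ^ (k + 1)`.

If `Γ₁ = ⋯ = Γ_{p+1} ≡ 0`, the error of the degree-`p + 1` Taylor polynomial of `y` at `0`
vanishes, so only the Taylor remainder `R` contributes. Taylor's theorem gives
`R = O(x ^ (p + 2))` and `R' = O(x ^ (p + 1))`; every node `-h, 0, αh, (cⱼ - 1)h, cⱼh` lies in
`[-h, h]`, and the coefficient polynomials are bounded on `[0, 1]`, so the error is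
`O(h ^ (p + 2))` uniformly in `α`.

Conversely, testing the order condition on `y = x ^ (p + 1)` gives
`|(p + 1)! · Γ_{p+1}(α)| · h ^ (p + 1) ≤ D · h ^ (p + 2)` for all small `h > 0`, which forces
`Γ_{p+1}(α) = 0`.
-/


/-- The quantity Γₖ(α) for the output component of a two-step GLM with
polynomial coefficient functions v, b̃ⱼ, bⱼ and abscissae cⱼ. -/
noncomputable def outGamma (s : ℕ) (cj : Fin s → ℝ) (v : Polynomial ℝ)
    (tb b : Fin s → Polynomial ℝ) (k : ℕ) (α : ℝ) : ℝ :=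
  (1 / (Nat.factorial (k - 1) : ℝ)) *
    ((1 - v.eval α) * (-1) ^ k / k
      + ∑ j, (tb j).eval α * (-(1 - cj j)) ^ (k - 1)
      + ∑ j, (b j).eval α * (cj j) ^ (k - 1)
      - α ^ k / k)

/-- The output-error function Ẽ^{s+1}(αh) of a two-step GLM applied to a
function y. -/
noncomputable def outError (s : ℕ) (cj : Fin s → ℝ) (v : Polynomial ℝ)
    (tb b : Fin s → Polynomial ℝ) (y : ℝ → ℝ) (h α : ℝ) : ℝ :=
  (1 - v.eval α) * y (-h) + v.eval α * y 0
    + h * ∑ j, (tb j).eval α * deriv y (-h + cj j * h)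
    + h * ∑ j, (b j).eval α * deriv y (cj j * h)
    - y (α * h)

open Filter Topology Asymptotics Finset

theorem taylorWithinEval_sub_isBigO {E : Type*} [NormedAddCommGroup E] [NormedSpace ℝ E]
    {f : ℝ → E} {x₀ : ℝ} {n : ℕ} (hf : ContDiff ℝ (n + 1 : ℕ) f) :
    (fun x ↦ f x - taylorWithinEval f n Set.univ x₀ x) =O[𝓝 x₀]
      fun x ↦ (x - x₀) ^ (n + 1) := by
  have hlast : (fun x ↦ (((n + 1 : ℝ) * n.factorial)⁻¹ * (x - x₀) ^ (n + 1)) •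
      iteratedDerivWithin (n + 1) f Set.univ x₀) =O[𝓝 x₀] fun x ↦ (x - x₀) ^ (n + 1) := by
    simpa using ((isBigO_refl (fun x ↦ (x - x₀) ^ (n + 1)) (𝓝 x₀)).const_mul_left
      ((n + 1 : ℝ) * n.factorial)⁻¹).smul
        (isBigO_const_const (iteratedDerivWithin (n + 1) f Set.univ x₀)
          (one_ne_zero (α := ℝ)) (𝓝 x₀))
  refine ((taylor_isLittleO_univ hf).isBigO.add hlast).congr_left fun x ↦ ?_
  rw [taylorWithinEval_succ]
  abel

theorem taylorWithinEval_univ_zero_eq_sum (f : ℝ → ℝ) (n : ℕ) :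
    taylorWithinEval f n Set.univ 0 =
      fun x ↦ ∑ k ∈ range (n + 1), iteratedDeriv k f 0 / k.factorial * x ^ k := by
  ext x
  simp only [taylor_within_apply, iteratedDerivWithin_univ, sub_zero, smul_eq_mul]
  exact sum_congr rfl fun k _ ↦ by ring

theorem exists_abs_le_mul_pow_of_isBigO {R : ℝ → ℝ} {n : ℕ}
    (hR : R =O[𝓝 0] fun x ↦ x ^ n) :
    ∃ C ≥ (0 : ℝ), ∃ δ > (0 : ℝ), ∀ h ∈ Set.Icc 0 δ, ∀ x, |x| ≤ h →
      |R x| ≤ C * h ^ n := by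
  obtain ⟨C, hC, hCR⟩ := hR.exists_nonneg
  obtain ⟨ε, hε, hball⟩ := Metric.eventually_nhds_iff.mp hCR.bound
  refine ⟨C, hC, ε / 2, by positivity, fun h hh x hx ↦ ?_⟩
  have hxε : dist x 0 < ε := by rw [Real.dist_0_eq_abs]; linarith [hh.2]
  calc |R x| ≤ C * |x| ^ n := by simpa using hball hxε
    _ ≤ C * h ^ n := by gcongr

theorem eq_zero_of_abs_mul_pow_le {c D H : ℝ} {n : ℕ} (hH : 0 < H)
    (hle : ∀ h ∈ Set.Ioc 0 H, |c * h ^ n| ≤ D * h ^ (n + 1)) : c = 0 := by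
  have hsmall : ∀ᶠ h in 𝓝[>] 0, |c| ≤ D * h := by
    filter_upwards [Ioc_mem_nhdsGT hH] with h hh
    have hpos : 0 < h ^ n := pow_pos hh.1 n
    have := hle h hh
    rw [abs_mul, abs_of_pos hpos, pow_succ] at this
    nlinarith
  have hlim : Tendsto (fun h ↦ D * h) (𝓝[>] 0) (𝓝 0) := by
    simpa using ((continuous_const_mul D).tendsto 0).mono_left nhdsWithin_le_nhds
  exact abs_nonpos_iff.mp (ge_of_tendsto hlim hsmall)

theorem abs_sum_mul_le {ι : Type*} (t : Finset ι) (w z : ι → ℝ) {B : ℝ}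
    (hz : ∀ i ∈ t, |z i| ≤ B) : |∑ i ∈ t, w i * z i| ≤ (∑ i ∈ t, |w i|) * B := by
  refine (abs_sum_le_sum_abs _ _).trans ?_
  rw [sum_mul]
  exact sum_le_sum fun i hi ↦ by
    rw [abs_mul]
    exact mul_le_mul_of_nonneg_left (hz i hi) (abs_nonneg _)

section OutError

variable {s : ℕ} {cj : Fin s → ℝ} {v : Polynomial ℝ} {tb b : Fin s → Polynomial ℝ}

theorem outError_add {y z : ℝ → ℝ} (hy : Differentiable ℝ y) (hz : Differentiable ℝ z)
    (h α : ℝ) :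
    outError s cj v tb b (fun x ↦ y x + z x) h α
      = outError s cj v tb b y h α + outError s cj v tb b z h α := by
  have hd : deriv (fun x ↦ y x + z x) = fun x ↦ deriv y x + deriv z x :=
    funext fun x ↦ deriv_add (hy x) (hz x)
  simp only [outError, hd, mul_add, sum_add_distrib]
  ring

theorem outError_const_mul (c : ℝ) {y : ℝ → ℝ} (hy : Differentiable ℝ y) (h α : ℝ) :
    outError s cj v tb b (fun x ↦ c * y x) h α = c * outError s cj v tb b y h α := by
  have hd : deriv (fun x ↦ c * y x) = fun x ↦ c * deriv y x :=
    funext fun x ↦ deriv_const_mul c (hy x)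
  simp only [outError, hd, mul_sum]
  simp only [mul_left_comm _ c, ← mul_sum]
  ring

theorem outError_const (c h α : ℝ) : outError s cj v tb b (fun _ ↦ c) h α = 0 := by
  simp only [outError, deriv_const, mul_zero, sum_const_zero]
  ring

theorem outError_pow_succ (m : ℕ) (h α : ℝ) :
    outError s cj v tb b (fun x ↦ x ^ (m + 1)) h α
      = (m + 1).factorial * outGamma s cj v tb b (m + 1) α * h ^ (m + 1) := by
  have hd : deriv (fun x : ℝ ↦ x ^ (m + 1)) = fun x ↦ ((m : ℝ) + 1) * x ^ m := by
    funext x; simp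
  have htb : ∑ j, (tb j).eval α * ((m + 1) * (-h + cj j * h) ^ m)
      = (m + 1) * h ^ m * ∑ j, (tb j).eval α * (-(1 - cj j)) ^ m := by
    rw [mul_sum]
    refine sum_congr rfl fun j _ ↦ ?_
    rw [show -h + cj j * h = -(1 - cj j) * h by ring, mul_pow]
    ring
  have hb : ∑ j, (b j).eval α * ((m + 1) * (cj j * h) ^ m)
      = (m + 1) * h ^ m * ∑ j, (b j).eval α * cj j ^ m := by
    rw [mul_sum]
    exact sum_congr rfl fun j _ ↦ by ring
  have hfact : ((m + 1).factorial : ℝ) = (m + 1) * m.factorial := by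
    push_cast [Nat.factorial_succ]; ring
  simp only [outError, outGamma, hd, htb, hb, Nat.add_sub_cancel, hfact]
  push_cast
  field_simp
  ring

theorem outError_sum_monomials (a : ℕ → ℝ) (N : ℕ) (h α : ℝ) :
    outError s cj v tb b (fun x ↦ ∑ k ∈ range N, a k * x ^ k) h α
      = ∑ k ∈ range N, a k * outError s cj v tb b (fun x ↦ x ^ k) h α := by
  induction N with
  | zero => simpa using outError_const 0 h α
  | succ N ih =>
    simp only [sum_range_succ]
    rw [outError_add (by fun_prop) (by fun_prop), ih,
      outError_const_mul _ (differentiable_pow N)]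

theorem outError_sum_monomials_eq_zero {n : ℕ} {α : ℝ}
    (hΓ : ∀ k, 1 ≤ k → k ≤ n → outGamma s cj v tb b k α = 0) (a : ℕ → ℝ) (h : ℝ) :
    outError s cj v tb b (fun x ↦ ∑ k ∈ range (n + 1), a k * x ^ k) h α = 0 := by
  rw [outError_sum_monomials, sum_range_succ']
  simp only [pow_zero, outError_const, mul_zero, add_zero]
  refine sum_eq_zero fun k hk ↦ ?_
  rw [outError_pow_succ, hΓ (k + 1) le_add_self (by simpa using hk)]
  ring

variable (v tb b) in
def outWeight (α : ℝ) : ℝ :=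
  |1 - v.eval α| + |v.eval α| + ∑ j, |(tb j).eval α| + ∑ j, |(b j).eval α| + 1

theorem continuous_outWeight : Continuous (outWeight v tb b) := by
  unfold outWeight
  fun_prop

theorem abs_outError_le_outWeight_mul (hcj : ∀ j, cj j ∈ Set.Icc (0 : ℝ) 1) {R : ℝ → ℝ}
    {C h α : ℝ} {m : ℕ} (hα : α ∈ Set.Icc (0 : ℝ) 1) (hh : 0 ≤ h)
    (hR : ∀ x, |x| ≤ h → |R x| ≤ C * h ^ (m + 1))
    (hR' : ∀ x, |x| ≤ h → |deriv R x| ≤ C * h ^ m) :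
    |outError s cj v tb b R h α| ≤ outWeight v tb b α * (C * h ^ (m + 1)) := by
  have hC : 0 ≤ C * h ^ m := (abs_nonneg _).trans (hR' 0 (by simpa using hh))
  have hleft : |-h| ≤ h := by rw [abs_neg, abs_of_nonneg hh]
  have hzero : |(0 : ℝ)| ≤ h := by simpa using hh
  have hout : |α * h| ≤ h := by
    rw [abs_mul, abs_of_nonneg hα.1, abs_of_nonneg hh]
    exact mul_le_of_le_one_left hh hα.2
  have hstage₁ : ∀ j, |-h + cj j * h| ≤ h := fun j ↦ by
    rw [abs_le]; constructor <;> nlinarith [(hcj j).1, (hcj j).2]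
  have hstage₂ : ∀ j, |cj j * h| ≤ h := fun j ↦ by
    rw [abs_mul, abs_of_nonneg (hcj j).1, abs_of_nonneg hh]
    exact mul_le_of_le_one_left hh (hcj j).2
  have hhC : h * (C * h ^ m) = C * h ^ (m + 1) := by ring
  have t₁ : |(1 - v.eval α) * R (-h)| ≤ |1 - v.eval α| * (C * h ^ (m + 1)) := by
    rw [abs_mul]; gcongr; exact hR _ hleft
  have t₂ : |v.eval α * R 0| ≤ |v.eval α| * (C * h ^ (m + 1)) := by
    rw [abs_mul]; gcongr; exact hR _ hzero
  have t₃ : |h * ∑ j, (tb j).eval α * deriv R (-h + cj j * h)|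
      ≤ (∑ j, |(tb j).eval α|) * (C * h ^ (m + 1)) := by
    rw [abs_mul, abs_of_nonneg hh, ← hhC, mul_left_comm]
    gcongr
    exact abs_sum_mul_le _ _ _ fun j _ ↦ hR' _ (hstage₁ j)
  have t₄ : |h * ∑ j, (b j).eval α * deriv R (cj j * h)|
      ≤ (∑ j, |(b j).eval α|) * (C * h ^ (m + 1)) := by
    rw [abs_mul, abs_of_nonneg hh, ← hhC, mul_left_comm]
    gcongr
    exact abs_sum_mul_le _ _ _ fun j _ ↦ hR' _ (hstage₂ j)
  have t₅ := hR _ hout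
  unfold outError outWeight
  rw [abs_le] at t₁ t₂ t₃ t₄ t₅ ⊢
  constructor <;> linarith

theorem exists_abs_outError_le_of_isBigO (hcj : ∀ j, cj j ∈ Set.Icc (0 : ℝ) 1) {R : ℝ → ℝ}
    {m : ℕ} (hR : R =O[𝓝 0] fun x ↦ x ^ (m + 2))
    (hR' : deriv R =O[𝓝 0] fun x ↦ x ^ (m + 1)) :
    ∃ D > (0 : ℝ), ∃ H > (0 : ℝ), ∀ α ∈ Set.Icc (0 : ℝ) 1, ∀ h ∈ Set.Icc 0 H,
      |outError s cj v tb b R h α| ≤ D * h ^ (m + 2) := by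
  obtain ⟨C₀, hC₀, δ₀, hδ₀, hR₀⟩ := exists_abs_le_mul_pow_of_isBigO hR
  obtain ⟨C₁, hC₁, δ₁, hδ₁, hR₁⟩ := exists_abs_le_mul_pow_of_isBigO hR'
  obtain ⟨K, hK⟩ := isCompact_Icc.bddAbove_image
    (continuous_outWeight (v := v) (tb := tb) (b := b)).continuousOn
  have hweight : ∀ α ∈ Set.Icc (0 : ℝ) 1, outWeight v tb b α ≤ K :=
    fun α hα ↦ hK (Set.mem_image_of_mem _ hα)
  have hK₀ : 0 ≤ K := by
    refine le_trans ?_ (hweight 0 (by simp))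
    unfold outWeight
    positivity
  set C := max C₀ C₁
  refine ⟨K * C + 1, by positivity, min δ₀ δ₁, lt_min hδ₀ hδ₁, fun α hα h hh ↦ ?_⟩
  have hh₀ : h ∈ Set.Icc 0 δ₀ := ⟨hh.1, hh.2.trans (min_le_left _ _)⟩
  have hh₁ : h ∈ Set.Icc 0 δ₁ := ⟨hh.1, hh.2.trans (min_le_right _ _)⟩
  have hbound := abs_outError_le_outWeight_mul (v := v) (tb := tb) (b := b) (C := C)
    (m := m + 1) hcj hα hh.1
    (fun x hx ↦ (hR₀ h hh₀ x hx).trans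
      (mul_le_mul_of_nonneg_right (le_max_left _ _) (pow_nonneg hh.1 _)))
    (fun x hx ↦ (hR₁ h hh₁ x hx).trans
      (mul_le_mul_of_nonneg_right (le_max_right _ _) (pow_nonneg hh.1 _)))
  calc |outError s cj v tb b R h α| ≤ outWeight v tb b α * (C * h ^ (m + 2)) := hbound
    _ ≤ K * (C * h ^ (m + 2)) := mul_le_mul_of_nonneg_right (hweight α hα)
      (mul_nonneg (le_max_of_le_left hC₀) (pow_nonneg hh.1 _))
    _ ≤ (K * C + 1) * h ^ (m + 2) := by linarith [pow_nonneg hh.1 (m + 2)]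

theorem exists_abs_outError_le_of_contDiff (hcj : ∀ j, cj j ∈ Set.Icc (0 : ℝ) 1) {n : ℕ}
    (hΓ : ∀ α ∈ Set.Icc (0 : ℝ) 1, ∀ k, 1 ≤ k → k ≤ n + 1 → outGamma s cj v tb b k α = 0)
    {y : ℝ → ℝ} (hy : ContDiff ℝ (n + 2 : ℕ) y) :
    ∃ D > (0 : ℝ), ∃ H > (0 : ℝ), ∀ α ∈ Set.Icc (0 : ℝ) 1, ∀ h ∈ Set.Icc 0 H,
      |outError s cj v tb b y h α| ≤ D * h ^ (n + 2) := by
  set P := taylorWithinEval y (n + 1) Set.univ 0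
  have hP : ∀ x, HasDerivAt P (taylorWithinEval (deriv y) n Set.univ 0 x) x := fun x ↦ by
    simpa only [derivWithin_univ] using
      hasDerivAt_taylorWithinEval_succ (s := Set.univ) (x₀ := 0) (x := x) y n
  have hPdiff : Differentiable ℝ P := fun x ↦ (hP x).differentiableAt
  have hydiff : Differentiable ℝ y := hy.differentiable (by simp)
  have hR : (fun x ↦ y x - P x) =O[𝓝 0] fun x ↦ x ^ (n + 2) := by
    simpa only [sub_zero] using taylorWithinEval_sub_isBigO (x₀ := 0) (n := n + 1) hy
  have hR' : deriv (fun x ↦ y x - P x) =O[𝓝 0] fun x ↦ x ^ (n + 1) := by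
    have hderiv : deriv (fun x ↦ y x - P x)
        = fun x ↦ deriv y x - taylorWithinEval (deriv y) n Set.univ 0 x :=
      funext fun x ↦ ((hydiff x).hasDerivAt.sub (hP x)).deriv
    simpa only [hderiv, sub_zero] using
      taylorWithinEval_sub_isBigO (x₀ := 0) (ContDiff.deriv' (n := (n + 1 : ℕ)) hy)
  obtain ⟨D, hD, H, hH, hbound⟩ :=
    exists_abs_outError_le_of_isBigO (v := v) (tb := tb) (b := b) hcj hR hR'
  refine ⟨D, hD, H, hH, fun α hα h hh ↦ ?_⟩
  have hexact : outError s cj v tb b P h α = 0 := by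
    rw [show P = _ from taylorWithinEval_univ_zero_eq_sum y (n + 1)]
    exact outError_sum_monomials_eq_zero (hΓ α hα) _ h
  have hsplit : (fun x ↦ P x + (y x - P x)) = y := by funext x; ring
  rw [← hsplit, outError_add (z := fun x ↦ y x - P x) hPdiff (hydiff.sub hPdiff), hexact,
    zero_add]
  exact hbound α hα h hh

theorem outGamma_eq_zero_of_abs_outError_pow_le {m : ℕ} {α D H : ℝ} (hH : 0 < H)
    (hbound : ∀ h ∈ Set.Ioc 0 H,
      |outError s cj v tb b (fun x ↦ x ^ (m + 1)) h α| ≤ D * h ^ (m + 2)) :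
    outGamma s cj v tb b (m + 1) α = 0 := by
  have hfact : ((m + 1).factorial : ℝ) ≠ 0 := by positivity
  have hscaled := eq_zero_of_abs_mul_pow_le (n := m + 1) (D := D) hH fun h hh ↦ by
    rw [← outError_pow_succ]
    exact hbound h hh
  exact (mul_eq_zero.mp hscaled).resolve_left hfact

end OutError

/-- Suppose Γₖ ≡ 0 on [0,1] for k = 1,...,p̃.  Then the method has uniform
order p̃+1 for the output (the error is O(h^{p̃+2}) uniformly in α ∈ [0,1]
for every C^{p̃+2} function y) if and only if Γ_{p̃+1} ≡ 0 on [0,1]. -/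
theorem stmt11 (s : ℕ) (cj : Fin s → ℝ) (hcj : ∀ j, cj j ∈ Set.Icc (0:ℝ) 1)
    (v : Polynomial ℝ) (tb b : Fin s → Polynomial ℝ) (p : ℕ)
    (hΓ : ∀ α ∈ Set.Icc (0:ℝ) 1, ∀ k, 1 ≤ k → k ≤ p →
      outGamma s cj v tb b k α = 0) :
    (∀ y : ℝ → ℝ, ContDiff ℝ (p + 2) y →
      ∃ D > (0:ℝ), ∃ H > (0:ℝ), ∀ α ∈ Set.Icc (0:ℝ) 1, ∀ h ∈ Set.Icc (0:ℝ) H,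
        |outError s cj v tb b y h α| ≤ D * h ^ (p + 2))
    ↔ (∀ α ∈ Set.Icc (0:ℝ) 1, outGamma s cj v tb b (p + 1) α = 0) := by
  constructor
  · intro horder α hα
    obtain ⟨D, -, H, hH, hbound⟩ := horder (fun x ↦ x ^ (p + 1)) (contDiff_id.pow _)
    exact outGamma_eq_zero_of_abs_outError_pow_le hH fun h hh ↦
      hbound α hα h (Set.Ioc_subset_Icc_self hh)
  · intro hΓ₁ y hy
    refine exists_abs_outError_le_of_contDiff hcj (fun α hα k hk₁ hk₂ ↦ ?_)
      (by exact_mod_cast hy)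
    rcases hk₂.lt_or_eq with hk | rfl
    · exact hΓ α hα k hk₁ (by omega)
    · exact hΓ₁ α hα
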